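/- Fix integers n ≥ m ≥ 2 and a real K > 0. Let R_m be the (𝔽_m-measurable) set of roots of the nonempty clusters of 𝔽_m. Then, conditionally on 𝔽_m, the indicator random variables (1{|𝒞_{j,n}| ≥ K})_{j ∈ R_m} are negatively correlated, and the indicators (1{|𝒞_{j,n}| < K})_{j ∈ R_m} are also negatively correlated; that is, for every nonempty (𝔽_m-measurably chosen) subset J ⊂ R_m, almost surely ℙ( ∀ j ∈ J, |𝒞_{j,n}| ≥ K | 𝔽_m ) ≤ ∏_{j∈J} ℙ( |𝒞_{j,n}| ≥ K | 𝔽_m ), and likewise with every event {|𝒞_{j,n}| ≥ K} replaced by {|𝒞_{j,n}| < K}. -/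
import Mathlib


open MeasureTheory Finset

/-- `IsForestRoot ξ u root` : `root k ω` is the label of the root of the connected component
of vertex `k` in the percolated random recursive forest built from `(ξ, u)`:
`root 1 = 1` and, for `k ≥ 2`, `root k = root (u k)` if the edge `{k, u k}` is retained
(`ξ k = 1`), while `root k = k` if it is deleted. -/
def IsForestRoot {Ω : Type} (ξ : ℕ → Ω → Bool) (u : ℕ → Ω → ℕ)
    (root : ℕ → Ω → ℕ) : Prop :=
  (∀ ω, root 1 ω = 1) ∧
  ∀ ω, ∀ k, 2 ≤ k → root k ω = if ξ k ω = true then root (u k ω) ω else k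

/-- `ForestLaw P α ξ u` : under the probability measure `P`, the `(ξ_k)_{k≥2}` are i.i.d.
Bernoulli(α), the `(u_k)_{k≥2}` are independent with `u_k` uniform on `{1,…,k−1}`, and all
these random variables are jointly independent; this is expressed by the finite-dimensional
product formula, together with measurability of the random variables. -/
def ForestLaw {Ω : Type} [MeasurableSpace Ω] (P : Measure Ω) (α : ℝ)
    (ξ : ℕ → Ω → Bool) (u : ℕ → Ω → ℕ) : Prop :=
  (∀ k b, MeasurableSet {ω | ξ k ω = b}) ∧
  (∀ k j, MeasurableSet {ω | u k ω = j}) ∧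
  ∀ n : ℕ, 2 ≤ n → ∀ (a : ℕ → Bool) (b : ℕ → ℕ),
    (P {ω | ∀ k, 2 ≤ k → k ≤ n → (ξ k ω = a k ∧ u k ω = b k)}).toReal =
      ∏ k ∈ Finset.Icc 2 n,
        ((if a k = true then α else 1 - α) *
          (if 1 ≤ b k ∧ b k ≤ k - 1 then 1 / ((k : ℝ) - 1) else 0))

/-- `clusterSize root n j ω = |𝒞_{j,n}|`, the size of the cluster of the forest `𝔽_n`
rooted at `j` (equal to `0` if no cluster is rooted at `j`). -/
def clusterSize {Ω : Type} (root : ℕ → Ω → ℕ) (n j : ℕ) (ω : Ω) : ℕ :=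
  ((Finset.Icc 1 n).filter fun k => root k ω = j).card

/-- `clusterCount root k n ω = N_k(n)`, the number of clusters of size `k` in `𝔽_n`.
In particular `clusterCount root 1 n ω = I(n)` is the number of isolated vertices. -/
def clusterCount {Ω : Type} (root : ℕ → Ω → ℕ) (k n : ℕ) (ω : Ω) : ℕ :=
  ((Finset.Icc 1 n).filter fun j => clusterSize root n j ω = k).card


namespace NCaux


/-- fiber size of `ρ` over `[1,t]`. -/
def fib (ρ : ℕ → ℕ) (t j : ℕ) : ℕ := ((Finset.Icc 1 t).filter fun k => ρ k = j).card

/-- future one-cluster probability, by backward recursion. -/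
noncomputable def Gfun (α : ℝ) (φ : ℕ → ℝ) : ℕ → ℕ → ℕ → ℝ
  | 0, _, s => φ s
  | r+1, t, s => (α * s / t) * Gfun α φ r (t+1) (s+1) + (1 - α * s / t) * Gfun α φ r (t+1) s

/-- future joint probability, by backward recursion. -/
noncomputable def Hfun (α : ℝ) (φ : ℕ → ℝ) (J : Finset ℕ) : ℕ → ℕ → (ℕ → ℕ) → ℝ
  | 0, t, ρ => ∏ j ∈ J, φ (fib ρ t j)
  | r+1, t, ρ => ∑ v ∈ Finset.Icc 1 t, (1/(t:ℝ)) *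
      (α * Hfun α φ J r (t+1) (fun k => if k = t+1 then ρ v else ρ k)
       + (1-α) * Hfun α φ J r (t+1) (fun k => if k = t+1 then t+1 else ρ k))

variable {α : ℝ} {φ : ℕ → ℝ}

lemma fib_le (ρ : ℕ → ℕ) (t j : ℕ) : fib ρ t j ≤ t := by
  have := Finset.card_filter_le (Finset.Icc 1 t) (fun k => ρ k = j)
  simpa [fib, Nat.card_Icc] using this

lemma fib_update (ρ : ℕ → ℕ) (t j x : ℕ) :
    fib (fun k => if k = t+1 then x else ρ k) (t+1) j
      = fib ρ t j + (if x = j then 1 else 0) := by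
  classical
  unfold fib
  rw [show Finset.Icc 1 (t+1) = insert (t+1) (Finset.Icc 1 t) from
      (Finset.insert_Icc_right_eq_Icc_add_one (by omega)).symm,
    Finset.filter_insert]
  have h1 : Finset.filter (fun k => (if k = t+1 then x else ρ k) = j) (Finset.Icc 1 t)
      = Finset.filter (fun k => ρ k = j) (Finset.Icc 1 t) := by
    apply Finset.filter_congr
    intro k hk
    simp only [Finset.mem_Icc] at hk
    simp [show k ≠ t+1 by omega]
  by_cases hx : x = j
  · rw [if_pos (by simpa using hx), Finset.card_insert_of_notMem (by simp), h1, if_pos hx]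
  · rw [if_neg (by simpa using hx), h1, if_neg hx]; ring

lemma fib_sum_ind (ρ : ℕ → ℕ) (t j : ℕ) :
    ∑ v ∈ Finset.Icc 1 t, (if ρ v = j then (1:ℝ) else 0) = (fib ρ t j : ℝ) := by
  classical
  classical
  rw [Finset.sum_boole]
  simp [fib]

lemma G_bounds (hα0 : 0 ≤ α) (hα1 : α ≤ 1) (hφ0 : ∀ s, 0 ≤ φ s) (hφ1 : ∀ s, φ s ≤ 1) :
    ∀ r t s, s ≤ t → 0 ≤ Gfun α φ r t s ∧ Gfun α φ r t s ≤ 1 := by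
  intro r
  induction r with
  | zero => intro t s _; exact ⟨hφ0 s, hφ1 s⟩
  | succ r ih =>
    intro t s hst
    have hq0 : 0 ≤ α * s / t := by positivity
    have hq1 : α * s / t ≤ 1 := by
      rcases Nat.eq_zero_or_pos t with ht | ht
      · subst ht; simp
      · rw [div_le_one (by exact_mod_cast ht)]
        calc α * s ≤ 1 * s := by
              apply mul_le_mul_of_nonneg_right hα1 (by positivity)
          _ ≤ t := by simpa using (Nat.cast_le (α := ℝ)).2 hst
    have h1 := ih (t+1) (s+1) (by omega)
    have h2 := ih (t+1) s (by omega)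
    constructor
    · simp only [Gfun]
      have : 0 ≤ 1 - α * s / t := by linarith
      nlinarith [h1.1, h2.1]
    · simp only [Gfun]
      nlinarith [h1.2, h2.2]

lemma G_mono (hα0 : 0 ≤ α) (hα1 : α ≤ 1) (hφ : ∀ s, φ s ≤ φ (s+1)) :
    ∀ r t s, s ≤ t → Gfun α φ r t s ≤ Gfun α φ r t (s+1) := by
  intro r
  induction r with
  | zero => intro t s _; exact hφ s
  | succ r ih =>
    intro t s hst
    have ht0 : (0:ℝ) ≤ t := by positivity
    have hc0 : 0 ≤ α / t := by positivity
    have hcs : α * s / t ≤ 1 := by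
      rcases Nat.eq_zero_or_pos t with ht | ht
      · subst ht; simp
      · rw [div_le_one (by exact_mod_cast ht)]
        calc α * s ≤ 1 * s := mul_le_mul_of_nonneg_right hα1 (by positivity)
          _ ≤ t := by simpa using (Nat.cast_le (α := ℝ)).2 hst
    have m1 := ih (t+1) (s+1) (by omega)
    have m2 := ih (t+1) s (by omega)
    simp only [Gfun]
    have key : Gfun α φ (r+1) t (s+1) - Gfun α φ (r+1) t s
        = (α * (s+1) / t) * (Gfun α φ r (t+1) (s+2) - Gfun α φ r (t+1) (s+1))
          + (1 - α * s / t) * (Gfun α φ r (t+1) (s+1) - Gfun α φ r (t+1) s) := by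
      simp only [Gfun]
      push_cast
      ring
    have h1 : (0:ℝ) ≤ α * (s+1) / t := by positivity
    simp only [Gfun] at key
    push_cast at key ⊢
    nlinarith [m1, m2]

lemma G_anti (hα0 : 0 ≤ α) (hα1 : α ≤ 1) (hφ : ∀ s, φ (s+1) ≤ φ s) :
    ∀ r t s, s ≤ t → Gfun α φ r t (s+1) ≤ Gfun α φ r t s := by
  intro r
  induction r with
  | zero => intro t s _; exact hφ s
  | succ r ih =>
    intro t s hst
    have hcs : α * s / t ≤ 1 := by
      rcases Nat.eq_zero_or_pos t with ht | ht
      · subst ht; simp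
      · rw [div_le_one (by exact_mod_cast ht)]
        calc α * s ≤ 1 * s := mul_le_mul_of_nonneg_right hα1 (by positivity)
          _ ≤ t := by simpa using (Nat.cast_le (α := ℝ)).2 hst
    have m1 := ih (t+1) (s+1) (by omega)
    have m2 := ih (t+1) s (by omega)
    have h1 : (0:ℝ) ≤ α * (s+1) / t := by positivity
    simp only [Gfun]
    push_cast at m1 m2 ⊢
    nlinarith [m1, m2]



lemma prod_add_sum_le_pos (J : Finset ℕ) (g e : ℕ → ℝ)
    (hg : ∀ j ∈ J, 0 ≤ g j) (he : ∀ j ∈ J, 0 ≤ e j) :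
    ∏ j ∈ J, g j + ∑ j ∈ J, e j * ∏ i ∈ J.erase j, g i ≤ ∏ j ∈ J, (g j + e j) := by
  classical
  induction J using Finset.induction_on with
  | empty => simp
  | @insert a s ha ih =>
    have hg' : ∀ j ∈ s, 0 ≤ g j := fun j hj => hg j (Finset.mem_insert_of_mem hj)
    have he' : ∀ j ∈ s, 0 ≤ e j := fun j hj => he j (Finset.mem_insert_of_mem hj)
    have hga : 0 ≤ g a := hg a (Finset.mem_insert_self a s)
    have hea : 0 ≤ e a := he a (Finset.mem_insert_self a s)
    have hprodg : 0 ≤ ∏ j ∈ s, g j := Finset.prod_nonneg hg'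
    have hsum : 0 ≤ ∑ j ∈ s, e j * ∏ i ∈ s.erase j, g i := by
      apply Finset.sum_nonneg
      intro j hj
      exact mul_nonneg (he' j hj) (Finset.prod_nonneg fun i hi => hg' i (Finset.mem_of_mem_erase hi))
    rw [Finset.prod_insert ha, Finset.prod_insert ha, Finset.sum_insert ha,
      Finset.erase_insert ha]
    have herase : ∀ j ∈ s, ∏ i ∈ (insert a s).erase j, g i = g a * ∏ i ∈ s.erase j, g i := by
      intro j hj
      rw [Finset.erase_insert_of_ne (by rintro rfl; exact ha hj), Finset.prod_insert
        (fun h => ha (Finset.mem_of_mem_erase h))]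
    rw [Finset.sum_congr rfl (fun j hj => by rw [herase j hj]),
      show ∑ j ∈ s, e j * (g a * ∏ i ∈ s.erase j, g i)
          = g a * ∑ j ∈ s, e j * ∏ i ∈ s.erase j, g i by
        rw [Finset.mul_sum]; exact Finset.sum_congr rfl fun j _ => by ring]
    have hIH := ih hg' he'
    calc g a * ∏ j ∈ s, g j + (e a * ∏ j ∈ s, g j + g a * ∑ j ∈ s, e j * ∏ i ∈ s.erase j, g i)
        ≤ (g a + e a) * (∏ j ∈ s, g j + ∑ j ∈ s, e j * ∏ i ∈ s.erase j, g i) := by nlinarith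
      _ ≤ (g a + e a) * ∏ j ∈ s, (g j + e j) := by
          apply mul_le_mul_of_nonneg_left hIH (by linarith)

lemma prod_add_sum_le_neg (J : Finset ℕ) (g e : ℕ → ℝ)
    (hg : ∀ j ∈ J, 0 ≤ g j) (he : ∀ j ∈ J, e j ≤ 0) (hge : ∀ j ∈ J, 0 ≤ g j + e j) :
    ∏ j ∈ J, g j + ∑ j ∈ J, e j * ∏ i ∈ J.erase j, g i ≤ ∏ j ∈ J, (g j + e j) := by
  classical
  induction J using Finset.induction_on with
  | empty => simp
  | @insert a s ha ih =>
    have hg' : ∀ j ∈ s, 0 ≤ g j := fun j hj => hg j (Finset.mem_insert_of_mem hj)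
    have he' : ∀ j ∈ s, e j ≤ 0 := fun j hj => he j (Finset.mem_insert_of_mem hj)
    have hge' : ∀ j ∈ s, 0 ≤ g j + e j := fun j hj => hge j (Finset.mem_insert_of_mem hj)
    have hga : 0 ≤ g a := hg a (Finset.mem_insert_self a s)
    have hea : e a ≤ 0 := he a (Finset.mem_insert_self a s)
    have hgea : 0 ≤ g a + e a := hge a (Finset.mem_insert_self a s)
    have hprodg : 0 ≤ ∏ j ∈ s, g j := Finset.prod_nonneg hg'
    have hsum : ∑ j ∈ s, e j * ∏ i ∈ s.erase j, g i ≤ 0 := by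
      apply Finset.sum_nonpos
      intro j hj
      exact mul_nonpos_of_nonpos_of_nonneg (he' j hj)
        (Finset.prod_nonneg fun i hi => hg' i (Finset.mem_of_mem_erase hi))
    rw [Finset.prod_insert ha, Finset.prod_insert ha, Finset.sum_insert ha,
      Finset.erase_insert ha]
    have herase : ∀ j ∈ s, ∏ i ∈ (insert a s).erase j, g i = g a * ∏ i ∈ s.erase j, g i := by
      intro j hj
      rw [Finset.erase_insert_of_ne (by rintro rfl; exact ha hj), Finset.prod_insert
        (fun h => ha (Finset.mem_of_mem_erase h))]
    rw [Finset.sum_congr rfl (fun j hj => by rw [herase j hj]),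
      show ∑ j ∈ s, e j * (g a * ∏ i ∈ s.erase j, g i)
          = g a * ∑ j ∈ s, e j * ∏ i ∈ s.erase j, g i by
        rw [Finset.mul_sum]; exact Finset.sum_congr rfl fun j _ => by ring]
    have hIH := ih hg' he' hge'
    calc g a * ∏ j ∈ s, g j + (e a * ∏ j ∈ s, g j + g a * ∑ j ∈ s, e j * ∏ i ∈ s.erase j, g i)
        ≤ (g a + e a) * (∏ j ∈ s, g j + ∑ j ∈ s, e j * ∏ i ∈ s.erase j, g i) := by nlinarith
      _ ≤ (g a + e a) * ∏ j ∈ s, (g j + e j) := mul_le_mul_of_nonneg_left hIH hgea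


lemma H_single (j : ℕ) :
    ∀ r t (ρ : ℕ → ℕ), j ≤ t → 1 ≤ t →
      Hfun α φ {j} r t ρ = Gfun α φ r t (fib ρ t j) := by
  intro r
  induction r with
  | zero => intro t ρ hj ht; simp [Hfun, Gfun]
  | succ r ih =>
    intro t ρ hj ht
    have htR : (t:ℝ) ≠ 0 := by positivity
    have hsummand : ∀ v ∈ Finset.Icc 1 t,
        (1/(t:ℝ)) * (α * Hfun α φ {j} r (t+1) (fun k => if k = t+1 then ρ v else ρ k)
          + (1-α) * Hfun α φ {j} r (t+1) (fun k => if k = t+1 then t+1 else ρ k))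
        = (1/(t:ℝ)) * Gfun α φ r (t+1) (fib ρ t j) + (if ρ v = j then (1:ℝ) else 0) *
            ((1/(t:ℝ)) * α * (Gfun α φ r (t+1) (fib ρ t j + 1) - Gfun α φ r (t+1) (fib ρ t j))) := by
      intro v _
      rw [ih (t+1) _ (by omega) (by omega), ih (t+1) _ (by omega) (by omega),
        fib_update, fib_update,
        show (if t + 1 = j then 1 else 0) = 0 from if_neg (by omega), Nat.add_zero]
      by_cases hv : ρ v = j
      · rw [if_pos hv, if_pos hv]; ring
      · rw [if_neg hv, if_neg hv, Nat.add_zero]; ring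
    rw [show Hfun α φ {j} (r+1) t ρ = ∑ v ∈ Finset.Icc 1 t, (1/(t:ℝ)) *
      (α * Hfun α φ {j} r (t+1) (fun k => if k = t+1 then ρ v else ρ k)
       + (1-α) * Hfun α φ {j} r (t+1) (fun k => if k = t+1 then t+1 else ρ k)) from rfl,
      Finset.sum_congr rfl hsummand, Finset.sum_add_distrib, Finset.sum_const,
      ← Finset.sum_mul, fib_sum_ind, Nat.card_Icc]
    rw [show Gfun α φ (r+1) t (fib ρ t j) = (α * (fib ρ t j) / t) * Gfun α φ r (t+1) (fib ρ t j + 1)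
        + (1 - α * (fib ρ t j) / t) * Gfun α φ r (t+1) (fib ρ t j) from rfl]
    rw [Nat.add_sub_cancel, nsmul_eq_mul]
    field_simp
    ring

lemma main_ineq (hα0 : 0 ≤ α) (hα1 : α ≤ 1) (hφ0 : ∀ s, 0 ≤ φ s) (hφ1 : ∀ s, φ s ≤ 1)
    (hsign : (∀ s, φ s ≤ φ (s+1)) ∨ (∀ s, φ (s+1) ≤ φ s)) (J : Finset ℕ) :
    ∀ r t (ρ : ℕ → ℕ), 1 ≤ t → (∀ j ∈ J, j ≤ t) →
      Hfun α φ J r t ρ ≤ ∏ j ∈ J, Gfun α φ r t (fib ρ t j) := by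
  classical
  intro r
  induction r with
  | zero => intro t ρ ht hJ; simp [Hfun, Gfun]
  | succ r ih =>
    intro t ρ ht hJ
    have htR : (0:ℝ) < t := by positivity
    set Gl : ℕ → ℝ := fun j => Gfun α φ r (t+1) (fib ρ t j) with hGl
    set Gh : ℕ → ℝ := fun j => Gfun α φ r (t+1) (fib ρ t j + 1) with hGh
    set P0 : ℝ := ∏ j ∈ J, Gl j with hP0
    set c : ℕ → ℝ := fun j => (Gh j - Gl j) * ∏ i ∈ J.erase j, Gl i with hc
    have hGl0 : ∀ j ∈ J, 0 ≤ Gl j := fun j _ =>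
      (G_bounds hα0 hα1 hφ0 hφ1 r (t+1) _ (by have := fib_le ρ t j; omega)).1
    have hGh0 : ∀ j ∈ J, 0 ≤ Gh j := fun j _ =>
      (G_bounds hα0 hα1 hφ0 hφ1 r (t+1) _ (by have := fib_le ρ t j; omega)).1
    -- pointwise bound on summands
    have hv : ∀ v ∈ Finset.Icc 1 t,
        (1/(t:ℝ)) * (α * Hfun α φ J r (t+1) (fun k => if k = t+1 then ρ v else ρ k)
          + (1-α) * Hfun α φ J r (t+1) (fun k => if k = t+1 then t+1 else ρ k))
        ≤ (1/(t:ℝ)) * P0 + (α/(t:ℝ)) *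
            (∑ j ∈ J, (if ρ v = j then (1:ℝ) else 0) * c j) := by
      intro v _
      have h2 : Hfun α φ J r (t+1) (fun k => if k = t+1 then t+1 else ρ k) ≤ P0 := by
        refine le_trans (ih (t+1) _ (by omega) (fun j hj => by have := hJ j hj; omega)) ?_
        apply le_of_eq
        apply Finset.prod_congr rfl
        intro j hj
        rw [fib_update, if_neg (by have := hJ j hj; omega)]
        simp [hGl]
      have h1 : Hfun α φ J r (t+1) (fun k => if k = t+1 then ρ v else ρ k)
          ≤ P0 + ∑ j ∈ J, (if ρ v = j then (1:ℝ) else 0) * c j := by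
        refine le_trans (ih (t+1) _ (by omega) (fun j hj => by have := hJ j hj; omega)) ?_
        apply le_of_eq
        have hrw : ∀ j ∈ J, Gfun α φ r (t+1) (fib (fun k => if k = t+1 then ρ v else ρ k) (t+1) j)
            = Gfun α φ r (t+1) (fib ρ t j + (if ρ v = j then 1 else 0)) := by
          intro j _; rw [fib_update]
        rw [Finset.prod_congr rfl hrw]
        by_cases hx : ρ v ∈ J
        · rw [← Finset.mul_prod_erase _ _ hx, if_pos rfl]
          have hrest : ∏ i ∈ J.erase (ρ v),
              Gfun α φ r (t+1) (fib ρ t i + (if ρ v = i then 1 else 0))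
              = ∏ i ∈ J.erase (ρ v), Gl i := by
            apply Finset.prod_congr rfl
            intro i hi
            rw [if_neg (Ne.symm (Finset.ne_of_mem_erase hi))]
            simp [hGl]
          rw [hrest, Finset.sum_eq_single (ρ v)
            (fun i _ hne => by rw [if_neg (Ne.symm hne), zero_mul])
            (fun h => absurd hx h)]
          rw [if_pos rfl, one_mul, hc]
          rw [hP0, ← Finset.mul_prod_erase _ _ hx]
          ring
        · have heq : ∀ j ∈ J, Gfun α φ r (t+1) (fib ρ t j + (if ρ v = j then 1 else 0)) = Gl j := by
            intro j hj
            rw [if_neg (fun h => hx (by rw [← h] at hj; exact hj))]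
            simp [hGl]
          rw [Finset.prod_congr rfl heq, Finset.sum_eq_zero
            (fun j hj => by
              rw [if_neg (fun h => hx (by rw [← h] at hj; exact hj)), zero_mul]), add_zero]
      have step : α * Hfun α φ J r (t+1) (fun k => if k = t+1 then ρ v else ρ k)
          + (1-α) * Hfun α φ J r (t+1) (fun k => if k = t+1 then t+1 else ρ k)
          ≤ α * (P0 + ∑ j ∈ J, (if ρ v = j then (1:ℝ) else 0) * c j) + (1-α) * P0 :=
        add_le_add (mul_le_mul_of_nonneg_left h1 hα0)
          (mul_le_mul_of_nonneg_left h2 (by linarith))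
      calc (1/(t:ℝ)) * _ ≤ (1/(t:ℝ)) * (α * (P0 + ∑ j ∈ J, (if ρ v = j then (1:ℝ) else 0) * c j)
            + (1-α) * P0) := mul_le_mul_of_nonneg_left step (by positivity)
        _ = (1/(t:ℝ)) * P0 + (α/(t:ℝ)) *
            (∑ j ∈ J, (if ρ v = j then (1:ℝ) else 0) * c j) := by ring
    -- sum the bound
    have hsum : Hfun α φ J (r+1) t ρ
        ≤ (t:ℝ) * ((1/(t:ℝ)) * P0) + (α/(t:ℝ)) * ∑ j ∈ J, (fib ρ t j : ℝ) * c j := by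
      refine le_trans (Finset.sum_le_sum hv) (le_of_eq ?_)
      rw [Finset.sum_add_distrib, Finset.sum_const, Nat.card_Icc, Nat.add_sub_cancel,
        nsmul_eq_mul, ← Finset.mul_sum, Finset.sum_comm]
      congr 1
      congr 1
      apply Finset.sum_congr rfl
      intro j _
      rw [← Finset.sum_mul, fib_sum_ind]
    set e : ℕ → ℝ := fun j => (α * (fib ρ t j : ℝ) / t) * (Gh j - Gl j) with he
    have hsum2 : (t:ℝ) * ((1/(t:ℝ)) * P0) + (α/(t:ℝ)) * ∑ j ∈ J, (fib ρ t j : ℝ) * c j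
        = P0 + ∑ j ∈ J, e j * ∏ i ∈ J.erase j, Gl i := by
      rw [Finset.mul_sum]
      congr 1
      · field_simp
      · apply Finset.sum_congr rfl
        intro j _
        rw [he, hc]
        ring
    have hfinal : P0 + ∑ j ∈ J, e j * ∏ i ∈ J.erase j, Gl i ≤ ∏ j ∈ J, (Gl j + e j) := by
      rcases hsign with hmono | hanti
      · apply prod_add_sum_le_pos J Gl e hGl0
        intro j hj
        have hmon := G_mono hα0 hα1 hmono r (t+1) (fib ρ t j) (by have := fib_le ρ t j; omega)
        have : (0:ℝ) ≤ α * (fib ρ t j : ℝ) / t := by positivity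
        exact mul_nonneg this (by simpa [hGh, hGl] using sub_nonneg.2 hmon)
      · apply prod_add_sum_le_neg J Gl e hGl0
        · intro j hj
          have hant := G_anti hα0 hα1 hanti r (t+1) (fib ρ t j) (by have := fib_le ρ t j; omega)
          have h0 : (0:ℝ) ≤ α * (fib ρ t j : ℝ) / t := by positivity
          exact mul_nonpos_of_nonneg_of_nonpos h0 (by simpa [hGh, hGl] using sub_nonpos.2 hant)
        · intro j hj
          have hq1 : α * (fib ρ t j : ℝ) / t ≤ 1 := by
            rw [div_le_one htR]
            calc α * (fib ρ t j : ℝ) ≤ 1 * (fib ρ t j : ℝ) :=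
                mul_le_mul_of_nonneg_right hα1 (by positivity)
              _ ≤ t := by
                  simpa using (Nat.cast_le (α := ℝ)).2 (fib_le ρ t j)
          have h0 : (0:ℝ) ≤ α * (fib ρ t j : ℝ) / t := by positivity
          have := hGl0 j hj
          have := hGh0 j hj
          rw [he]
          nlinarith
    have hlast : ∏ j ∈ J, (Gl j + e j) = ∏ j ∈ J, Gfun α φ (r+1) t (fib ρ t j) := by
      apply Finset.prod_congr rfl
      intro j _
      rw [show Gfun α φ (r+1) t (fib ρ t j)
          = (α * (fib ρ t j : ℝ) / t) * Gh j + (1 - α * (fib ρ t j : ℝ) / t) * Gl j from rfl]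
      rw [he]
      ring
    calc Hfun α φ J (r+1) t ρ ≤ _ := hsum
      _ = _ := hsum2
      _ ≤ _ := hfinal
      _ = _ := hlast




/-- deterministic root map computed from a configuration. -/
def rootMap (aa : ℕ → Bool) (bb : ℕ → ℕ) : ℕ → ℕ
  | k => if h : 2 ≤ k ∧ bb k < k ∧ aa k = true then rootMap aa bb (bb k) else k
  termination_by k => k
  decreasing_by exact h.2.1

lemma rootMap_eq (aa : ℕ → Bool) (bb : ℕ → ℕ) (k : ℕ) :
    rootMap aa bb k = if 2 ≤ k ∧ bb k < k ∧ aa k = true then rootMap aa bb (bb k) else k := by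
  rw [rootMap]
  split <;> rfl


lemma rootMap_le (aa : ℕ → Bool) (bb : ℕ → ℕ) : ∀ k, rootMap aa bb k ≤ k := by
  intro k
  induction k using Nat.strong_induction_on with
  | _ k ih =>
    rw [rootMap_eq]
    split <;> rename_i h
    · exact le_trans (ih (bb k) h.2.1) (le_of_lt h.2.1)
    · exact le_rfl

lemma rootMap_congr (aa aa' : ℕ → Bool) (bb bb' : ℕ → ℕ) :
    ∀ k, (∀ i, i ≤ k → aa i = aa' i ∧ bb i = bb' i) → rootMap aa bb k = rootMap aa' bb' k := by
  intro k
  induction k using Nat.strong_induction_on with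
  | _ k ih =>
    intro hagree
    rw [rootMap_eq, rootMap_eq aa' bb']
    have hk := hagree k le_rfl
    rw [← hk.1, ← hk.2]
    split <;> rename_i h
    · exact ih (bb k) h.2.1 (fun i hi => hagree i (le_trans hi (le_of_lt h.2.1)))
    · rfl


section Measure

variable {Ω : Type} [MeasurableSpace Ω]

/-- elementary event of the first `t` steps. -/
def Dset (ξ : ℕ → Ω → Bool) (u : ℕ → Ω → ℕ) (t : ℕ) (aa : ℕ → Bool) (bb : ℕ → ℕ) : Set Ω :=
  {ω | ∀ k, 2 ≤ k → k ≤ t → (ξ k ω = aa k ∧ u k ω = bb k)}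

/-- weight of one coordinate. -/
noncomputable def wfac (α : ℝ) (k : ℕ) (β : Bool) (v : ℕ) : ℝ :=
  (if β = true then α else 1 - α) * (if 1 ≤ v ∧ v ≤ k - 1 then 1 / ((k : ℝ) - 1) else 0)

variable {P : Measure Ω} {α : ℝ} {ξ : ℕ → Ω → Bool} {u : ℕ → Ω → ℕ}

lemma Dset_measurable (hlaw : ForestLaw P α ξ u) (t : ℕ) (aa : ℕ → Bool) (bb : ℕ → ℕ) :
    MeasurableSet (Dset ξ u t aa bb) := by
  have : Dset ξ u t aa bb =
      ⋂ (k : ℕ), ⋂ (_ : 2 ≤ k), ⋂ (_ : k ≤ t), ({ω | ξ k ω = aa k} ∩ {ω | u k ω = bb k}) := by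
    ext ω
    simp only [Dset, Set.mem_iInter, Set.mem_inter_iff, Set.mem_setOf_eq]
  rw [this]
  exact MeasurableSet.iInter fun k => MeasurableSet.iInter fun _ => MeasurableSet.iInter fun _ =>
    (hlaw.1 k (aa k)).inter (hlaw.2.1 k (bb k))

lemma hlaw_toReal (hlaw : ForestLaw P α ξ u) {t : ℕ} (ht : 2 ≤ t) (aa : ℕ → Bool) (bb : ℕ → ℕ) :
    (P (Dset ξ u t aa bb)).toReal = ∏ k ∈ Finset.Icc 2 t, wfac α k (aa k) (bb k) :=
  hlaw.2.2 t ht aa bb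

/-- finite additivity along disjoint measurable hulls. -/
lemma measure_biUnion_hulls {ι : Type} [DecidableEq ι] (μ : Measure Ω) (s : Finset ι)
    (f M : ι → Set Ω) (hM : ∀ i ∈ s, MeasurableSet (M i)) (hf : ∀ i ∈ s, f i ⊆ M i)
    (hd : ∀ i ∈ s, ∀ j ∈ s, i ≠ j → Disjoint (M i) (M j)) :
    μ (⋃ i ∈ s, f i) = ∑ i ∈ s, μ (f i) := by
  classical
  induction s using Finset.induction_on with
  | empty => simp
  | @insert a s ha ih =>
    rw [Finset.sum_insert ha]
    have hUnion : (⋃ i ∈ insert a s, f i) = f a ∪ ⋃ i ∈ s, f i := by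
      simp [Set.biUnion_insert]
    rw [hUnion]
    have hMa : MeasurableSet (M a) := hM a (Finset.mem_insert_self a s)
    have key := measure_inter_add_diff (μ := μ) (f a ∪ ⋃ i ∈ s, f i) hMa
    have h1 : (f a ∪ ⋃ i ∈ s, f i) ∩ M a = f a := by
      apply Set.Subset.antisymm
      · intro x hx
        rcases hx.1 with h | h
        · exact h
        · simp only [Set.mem_iUnion] at h
          obtain ⟨i, his, hxi⟩ := h
          exfalso
          have hne : a ≠ i := fun h' => ha (h' ▸ his)
          exact (hd a (Finset.mem_insert_self a s) i (Finset.mem_insert_of_mem his) hne)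
            |>.le_bot ⟨hx.2, hf i (Finset.mem_insert_of_mem his) hxi⟩
      · intro x hx
        exact ⟨Set.mem_union_left _ hx, hf a (Finset.mem_insert_self a s) hx⟩
    have h2 : (f a ∪ ⋃ i ∈ s, f i) \ M a = ⋃ i ∈ s, f i := by
      apply Set.Subset.antisymm
      · intro x hx
        rcases hx.1 with h | h
        · exact absurd (hf a (Finset.mem_insert_self a s) h) hx.2
        · exact h
      · intro x hx
        refine ⟨Set.mem_union_right _ hx, ?_⟩
        simp only [Set.mem_iUnion] at hx
        obtain ⟨i, his, hxi⟩ := hx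
        intro hxa
        have hne : a ≠ i := fun h' => ha (h' ▸ his)
        exact (hd a (Finset.mem_insert_self a s) i (Finset.mem_insert_of_mem his) hne)
          |>.le_bot ⟨hxa, hf i (Finset.mem_insert_of_mem his) hxi⟩
    rw [h1, h2] at key
    rw [← key, ih (fun i hi => hM i (Finset.mem_insert_of_mem hi))
      (fun i hi => hf i (Finset.mem_insert_of_mem hi))
      (fun i hi j hj hij => hd i (Finset.mem_insert_of_mem hi) j (Finset.mem_insert_of_mem hj) hij)]

/-- the actual root agrees with the deterministic root map on elementary events. -/
lemma root_eq_rootMap {root : ℕ → Ω → ℕ} (hroot : IsForestRoot ξ u root)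
    (aa : ℕ → Bool) (bb : ℕ → ℕ) (t : ℕ) (ω : Ω)
    (hω : ∀ k, 2 ≤ k → k ≤ t → ξ k ω = aa k ∧ u k ω = bb k)
    (hval : ∀ k, 2 ≤ k → k ≤ t → 1 ≤ bb k ∧ bb k ≤ k - 1) :
    ∀ k, 1 ≤ k → k ≤ t → root k ω = rootMap aa bb k := by
  intro k
  induction k using Nat.strong_induction_on with
  | _ k ih =>
    intro hk1 hkt
    rcases Nat.lt_or_ge k 2 with hk2 | hk2
    · have hk : k = 1 := by omega
      subst hk
      rw [hroot.1 ω, rootMap_eq]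
      rw [if_neg (by omega)]
    · have hmem := hω k hk2 hkt
      have hv := hval k hk2 hkt
      rw [hroot.2 ω k hk2, rootMap_eq, hmem.1, hmem.2]
      by_cases haa : aa k = true
      · rw [if_pos haa, if_pos ⟨hk2, by omega, haa⟩]
        exact ih (bb k) (by omega) (by omega) (by omega)
      · rw [if_neg haa, if_neg (by tauto)]

end Measure
section Bridge

variable {Ω : Type} [MeasurableSpace Ω] {P : Measure Ω} [IsProbabilityMeasure P]
  {α : ℝ} {ξ : ℕ → Ω → Bool} {u : ℕ → Ω → ℕ} {root : ℕ → Ω → ℕ}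

/-- congruence for `Hfun` in the root map. -/
lemma Hfun_congr {α : ℝ} {φ : ℕ → ℝ} {J : Finset ℕ} :
    ∀ r t (ρ₁ ρ₂ : ℕ → ℕ), (∀ k, 1 ≤ k → k ≤ t → ρ₁ k = ρ₂ k) →
      Hfun α φ J r t ρ₁ = Hfun α φ J r t ρ₂ := by
  intro r
  induction r with
  | zero =>
    intro t ρ₁ ρ₂ hag
    show ∏ j ∈ J, φ (fib ρ₁ t j) = ∏ j ∈ J, φ (fib ρ₂ t j)
    apply Finset.prod_congr rfl
    intro j _
    congr 1
    unfold fib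
    apply congrArg
    apply Finset.filter_congr
    intro k hk
    simp only [Finset.mem_Icc] at hk
    rw [hag k hk.1 hk.2]
  | succ r ih =>
    intro t ρ₁ ρ₂ hag
    show (∑ v ∈ Finset.Icc 1 t, _) = ∑ v ∈ Finset.Icc 1 t, _
    apply Finset.sum_congr rfl
    intro v hv
    simp only [Finset.mem_Icc] at hv
    have h1 : Hfun α φ J r (t+1) (fun k => if k = t+1 then ρ₁ v else ρ₁ k)
        = Hfun α φ J r (t+1) (fun k => if k = t+1 then ρ₂ v else ρ₂ k) := by
      apply ih
      intro k hk1 hk2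
      by_cases hk : k = t+1
      · simp only [if_pos hk]; exact hag v hv.1 hv.2
      · simp only [if_neg hk]; exact hag k hk1 (by omega)
    have h2 : Hfun α φ J r (t+1) (fun k => if k = t+1 then t+1 else ρ₁ k)
        = Hfun α φ J r (t+1) (fun k => if k = t+1 then t+1 else ρ₂ k) := by
      apply ih
      intro k hk1 hk2
      by_cases hk : k = t+1
      · simp only [if_pos hk]
      · simp only [if_neg hk]; exact hag k hk1 (by omega)
    rw [h1, h2]

/-- The bridge between the measure and the backward recursion `Hfun`. -/
lemma bridge (hlaw : ForestLaw P α ξ u) (hroot : IsForestRoot ξ u root)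
    (J : Finset ℕ) (Q : ℕ → Prop) (φ : ℕ → ℝ)
    (hφt : ∀ s, Q s → φ s = 1) (hφf : ∀ s, ¬ Q s → φ s = 0)
    (n : ℕ) :
    ∀ r t (aa : ℕ → Bool) (bb : ℕ → ℕ), t + r = n → 2 ≤ t →
      (∀ k, 2 ≤ k → k ≤ t → 1 ≤ bb k ∧ bb k ≤ k - 1) →
      (P (Dset ξ u t aa bb ∩ {ω | ∀ j ∈ J, Q (clusterSize root n j ω)})).toReal
        = (∏ k ∈ Finset.Icc 2 t, wfac α k (aa k) (bb k)) *
            Hfun α φ J r t (rootMap aa bb) := by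
  classical
  intro r
  induction r with
  | zero =>
    intro t aa bb htn ht2 hval
    have ht : t = n := by omega
    subst ht
    have hdet : ∀ ω ∈ Dset ξ u t aa bb, ∀ j,
        clusterSize root t j ω = fib (rootMap aa bb) t j := by
      intro ω hω j
      unfold clusterSize fib
      apply congrArg
      apply Finset.filter_congr
      intro k hk
      simp only [Finset.mem_Icc] at hk
      rw [root_eq_rootMap hroot aa bb t ω hω hval k hk.1 hk.2]
    by_cases hQ : ∀ j ∈ J, Q (fib (rootMap aa bb) t j)
    · have hsub : Dset ξ u t aa bb ⊆ {ω | ∀ j ∈ J, Q (clusterSize root t j ω)} := by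
        intro ω hω j hj
        rw [hdet ω hω j]
        exact hQ j hj
      rw [Set.inter_eq_self_of_subset_left hsub, hlaw_toReal hlaw ht2 aa bb]
      have h1 : Hfun α φ J 0 t (rootMap aa bb) = 1 := by
        show (∏ j ∈ J, φ (fib (rootMap aa bb) t j)) = 1
        exact Finset.prod_eq_one fun j hj => hφt _ (hQ j hj)
      rw [h1, mul_one]
    · push_neg at hQ
      obtain ⟨j, hj, hnQ⟩ := hQ
      have hempty : Dset ξ u t aa bb ∩ {ω | ∀ j ∈ J, Q (clusterSize root t j ω)} = ∅ := by
        ext ω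
        simp only [Set.mem_inter_iff, Set.mem_setOf_eq, Set.mem_empty_iff_false, iff_false,
          not_and]
        intro hω hall
        exact hnQ (by rw [← hdet ω hω j]; exact hall j hj)
      have h0 : Hfun α φ J 0 t (rootMap aa bb) = 0 := by
        show (∏ j ∈ J, φ (fib (rootMap aa bb) t j)) = 0
        exact Finset.prod_eq_zero hj (hφf _ hnQ)
      rw [hempty, h0, mul_zero]
      simp
  | succ r ih =>
    intro t aa bb htn ht2 hval
    -- abbreviations
    have htR : ((t:ℝ)) ≠ 0 := by positivity
    -- the null set of invalid choices at time t+1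
    have hnullv : ∀ v, v ∉ Finset.Icc 1 t → ∀ β : Bool,
        P (Dset ξ u (t+1) (fun k => if k = t+1 then β else aa k)
          (fun k => if k = t+1 then v else bb k)) = 0 := by
      intro v hv β
      have htr := hlaw_toReal hlaw (t := t+1) (by omega)
        (fun k => if k = t+1 then β else aa k) (fun k => if k = t+1 then v else bb k)
      have hzero : (∏ k ∈ Finset.Icc 2 (t+1), wfac α k
          ((fun k => if k = t+1 then β else aa k) k)
          ((fun k => if k = t+1 then v else bb k) k)) = 0 := by
        apply Finset.prod_eq_zero (i := t+1) (by simp only [Finset.mem_Icc]; omega)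
        show wfac α (t+1) (if t+1 = t+1 then β else aa (t+1))
            (if t+1 = t+1 then v else bb (t+1)) = 0
        rw [if_pos rfl, if_pos rfl]
        unfold wfac
        have h2 : ¬(1 ≤ v ∧ v ≤ t + 1 - 1) := fun hc => hv (Finset.mem_Icc.2 ⟨hc.1, by omega⟩)
        rw [if_neg h2, mul_zero]
      rw [hzero] at htr
      exact ((ENNReal.toReal_eq_zero_iff _).1 htr).resolve_right (measure_ne_top P _)
    -- step decomposition of the measure
    have hstep : P (Dset ξ u t aa bb ∩ {ω | ∀ j ∈ J, Q (clusterSize root n j ω)})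
        = ∑ v ∈ Finset.Icc 1 t,
            (P (Dset ξ u (t+1) (fun k => if k = t+1 then true else aa k)
                  (fun k => if k = t+1 then v else bb k) ∩
                {ω | ∀ j ∈ J, Q (clusterSize root n j ω)})
              + P (Dset ξ u (t+1) (fun k => if k = t+1 then false else aa k)
                  (fun k => if k = t+1 then v else bb k) ∩
                {ω | ∀ j ∈ J, Q (clusterSize root n j ω)})) := by
      set B : Set Ω := {ω | ∀ j ∈ J, Q (clusterSize root n j ω)} with hB
      have hMsub : ∀ (β : Bool) (v : ℕ),
          Dset ξ u (t+1) (fun k => if k = t+1 then β else aa k)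
            (fun k => if k = t+1 then v else bb k) ⊆ Dset ξ u t aa bb := by
        intro β v ω hω k hk2 hkt
        have h := hω k hk2 (by omega)
        have hk : k ≠ t+1 := by omega
        simpa only [if_neg hk] using h
      have hdisj : ∀ (β₁ : Bool) (v₁ : ℕ) (β₂ : Bool) (v₂ : ℕ), (β₁, v₁) ≠ (β₂, v₂) →
          Disjoint (Dset ξ u (t+1) (fun k => if k = t+1 then β₁ else aa k)
              (fun k => if k = t+1 then v₁ else bb k))
            (Dset ξ u (t+1) (fun k => if k = t+1 then β₂ else aa k)
              (fun k => if k = t+1 then v₂ else bb k)) := by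
        intro β₁ v₁ β₂ v₂ hne
        rw [Set.disjoint_left]
        intro ω h1 h2
        have e1 := h1 (t+1) (by omega) le_rfl
        have e2 := h2 (t+1) (by omega) le_rfl
        simp at e1 e2
        apply hne
        rw [Prod.mk.injEq]
        constructor
        · rw [← e1.1, ← e2.1]
        · rw [← e1.2, ← e2.2]
      -- the null remainder
      set N : Set Ω := ⋃ (v : ℕ), (if v ∈ Finset.Icc 1 t then (∅ : Set Ω) else
          (Dset ξ u (t+1) (fun k => if k = t+1 then true else aa k)
              (fun k => if k = t+1 then v else bb k)
            ∪ Dset ξ u (t+1) (fun k => if k = t+1 then false else aa k)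
              (fun k => if k = t+1 then v else bb k))) with hN
      have hNnull : P N = 0 := by
        apply measure_iUnion_null
        intro v
        by_cases hv : v ∈ Finset.Icc 1 t
        · simp [hv]
        · rw [if_neg hv]
          exact measure_union_null (hnullv v hv true) (hnullv v hv false)
      have hcover : Dset ξ u t aa bb ∩ B ⊆
          (⋃ p ∈ (Finset.univ ×ˢ Finset.Icc 1 t : Finset (Bool × ℕ)),
            (Dset ξ u (t+1) (fun k => if k = t+1 then p.1 else aa k)
              (fun k => if k = t+1 then p.2 else bb k) ∩ B)) ∪ N := by
        intro ω hω
        have hmem : ω ∈ Dset ξ u (t+1) (fun k => if k = t+1 then ξ (t+1) ω else aa k)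
            (fun k => if k = t+1 then u (t+1) ω else bb k) := by
          intro k hk2 hkt
          by_cases hk : k = t+1
          · subst hk; simp
          · simp only [if_neg hk]
            exact hω.1 k hk2 (by omega)
        by_cases hv : u (t+1) ω ∈ Finset.Icc 1 t
        · left
          refine Set.mem_iUnion₂.2 ⟨(ξ (t+1) ω, u (t+1) ω), ?_, hmem, hω.2⟩
          simp only [Finset.mem_product, Finset.mem_univ, true_and]
          exact hv
        · right
          rw [hN]
          apply Set.mem_iUnion.2 ⟨u (t+1) ω, ?_⟩
          rw [if_neg hv]
          cases hβ : ξ (t+1) ω with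
          | true => left; rw [← hβ]; exact hmem
          | false => right; rw [← hβ]; exact hmem
      have hsub2 : (⋃ p ∈ (Finset.univ ×ˢ Finset.Icc 1 t : Finset (Bool × ℕ)),
          (Dset ξ u (t+1) (fun k => if k = t+1 then p.1 else aa k)
            (fun k => if k = t+1 then p.2 else bb k) ∩ B)) ⊆
          Dset ξ u t aa bb ∩ B := by
        intro ω hω
        simp only [Set.mem_iUnion] at hω
        obtain ⟨p, _, hp⟩ := hω
        exact ⟨hMsub p.1 p.2 hp.1, hp.2⟩
      have hadd := measure_biUnion_hulls P ((Finset.univ ×ˢ Finset.Icc 1 t : Finset (Bool × ℕ)))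
        (fun p => Dset ξ u (t+1) (fun k => if k = t+1 then p.1 else aa k)
            (fun k => if k = t+1 then p.2 else bb k) ∩ B)
        (fun p => Dset ξ u (t+1) (fun k => if k = t+1 then p.1 else aa k)
            (fun k => if k = t+1 then p.2 else bb k))
        (fun p _ => Dset_measurable hlaw (t+1) _ _)
        (fun p _ => Set.inter_subset_left)
        (fun p _ q _ hpq => hdisj p.1 p.2 q.1 q.2 (by
          intro h; exact hpq (by rw [← Prod.mk.eta (p := p), ← Prod.mk.eta (p := q), h])))
      have hEq : P (Dset ξ u t aa bb ∩ B)
          = ∑ p ∈ (Finset.univ ×ˢ Finset.Icc 1 t : Finset (Bool × ℕ)),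
              P (Dset ξ u (t+1) (fun k => if k = t+1 then p.1 else aa k)
                (fun k => if k = t+1 then p.2 else bb k) ∩ B) := by
        apply le_antisymm
        · calc P (Dset ξ u t aa bb ∩ B) ≤ P ((⋃ p ∈ (Finset.univ ×ˢ Finset.Icc 1 t :
                Finset (Bool × ℕ)), (Dset ξ u (t+1) (fun k => if k = t+1 then p.1 else aa k)
                (fun k => if k = t+1 then p.2 else bb k) ∩ B)) ∪ N) := measure_mono hcover
            _ ≤ P (⋃ p ∈ (Finset.univ ×ˢ Finset.Icc 1 t : Finset (Bool × ℕ)),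
                (Dset ξ u (t+1) (fun k => if k = t+1 then p.1 else aa k)
                (fun k => if k = t+1 then p.2 else bb k) ∩ B)) + P N := measure_union_le _ _
            _ = _ := by rw [hNnull, add_zero, hadd]
        · rw [← hadd]
          exact measure_mono hsub2
      rw [hEq, Finset.sum_product_right]
      apply Finset.sum_congr rfl
      intro v _
      rw [Fintype.sum_bool]
    -- apply inductive hypothesis to each term and recombine
    rw [hstep, ENNReal.toReal_sum (fun v _ => by
      exact ENNReal.add_ne_top.2 ⟨measure_ne_top P _, measure_ne_top P _⟩)]
    have hterm : ∀ v ∈ Finset.Icc 1 t, ∀ β : Bool,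
        (P (Dset ξ u (t+1) (fun k => if k = t+1 then β else aa k)
            (fun k => if k = t+1 then v else bb k) ∩
          {ω | ∀ j ∈ J, Q (clusterSize root n j ω)})).toReal
        = (∏ k ∈ Finset.Icc 2 t, wfac α k (aa k) (bb k)) * (wfac α (t+1) β v) *
            Hfun α φ J r (t+1)
              (fun k => if k = t+1 then (if β = true then rootMap aa bb v else t+1)
                else rootMap aa bb k) := by
      intro v hv β
      simp only [Finset.mem_Icc] at hv
      have hval' : ∀ k, 2 ≤ k → k ≤ t+1 →
          1 ≤ (fun k => if k = t+1 then v else bb k) k ∧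
          (fun k => if k = t+1 then v else bb k) k ≤ k - 1 := by
        intro k hk2 hkt
        by_cases hk : k = t+1
        · subst hk; simp; omega
        · simp only [if_neg hk]; exact hval k hk2 (by omega)
      rw [ih (t+1) _ _ (by omega) (by omega) hval']
      have hW : (∏ k ∈ Finset.Icc 2 (t+1), wfac α k
            ((fun k => if k = t+1 then β else aa k) k)
            ((fun k => if k = t+1 then v else bb k) k))
          = (∏ k ∈ Finset.Icc 2 t, wfac α k (aa k) (bb k)) * wfac α (t+1) β v := by
        rw [Finset.prod_Icc_succ_top (by omega)]
        congr 1
        · apply Finset.prod_congr rfl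
          intro k hk
          simp only [Finset.mem_Icc] at hk
          have hk1 : k ≠ t+1 := by omega
          simp only [if_neg hk1]
        · show wfac α (t+1) (if t+1 = t+1 then β else aa (t+1))
              (if t+1 = t+1 then v else bb (t+1)) = wfac α (t+1) β v
          rw [if_pos rfl, if_pos rfl]
      rw [hW]
      congr 1
      apply Hfun_congr
      intro k hk1 hk2
      by_cases hk : k = t+1
      · subst hk
        rw [if_pos rfl, rootMap_eq]
        cases β with
        | true =>
          rw [if_pos ⟨by omega, by rw [if_pos rfl]; omega, by rw [if_pos rfl]⟩,
            if_pos rfl, if_pos rfl]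
          apply rootMap_congr
          intro i hi
          have hiv : i ≤ t := by omega
          rw [if_neg (by omega), if_neg (by omega)]
          exact ⟨rfl, rfl⟩
        | false =>
          rw [if_neg (by rw [if_pos rfl]; simp), if_neg (by simp)]
      · rw [if_neg hk]
        apply rootMap_congr
        intro i hi
        rw [if_neg (by omega), if_neg (by omega)]
        exact ⟨rfl, rfl⟩
    -- final computation
    rw [show Hfun α φ J (r+1) t (rootMap aa bb) = ∑ v ∈ Finset.Icc 1 t, (1/(t:ℝ)) *
        (α * Hfun α φ J r (t+1)
            (fun k => if k = t+1 then rootMap aa bb v else rootMap aa bb k)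
          + (1-α) * Hfun α φ J r (t+1)
            (fun k => if k = t+1 then t+1 else rootMap aa bb k)) from rfl,
      Finset.mul_sum]
    apply Finset.sum_congr rfl
    intro v hv
    rw [ENNReal.toReal_add (measure_ne_top P _) (measure_ne_top P _),
      hterm v hv true, hterm v hv false]
    have hw1 : wfac α (t+1) true v = α * (1 / (t:ℝ)) := by
      unfold wfac
      rw [if_pos rfl, if_pos (by simp only [Finset.mem_Icc] at hv; omega)]
      push_cast
      ring
    have hw2 : wfac α (t+1) false v = (1-α) * (1 / (t:ℝ)) := by
      unfold wfac
      rw [if_neg (by simp), if_pos (by simp only [Finset.mem_Icc] at hv; omega)]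
      push_cast
      ring
    rw [hw1, hw2]
    simp only [Bool.false_eq_true, if_false, if_true]
    ring

end Bridge

end NCaux
/-- **Lemma 4.2 (negative correlation of cluster sizes).** Fix `n ≥ m ≥ 2` and `K > 0`.
Conditionally on the forest `𝔽_m` (here: conditionally on each elementary event `A`
determined by the values of `(ξ_k, u_k)_{2 ≤ k ≤ m}` and having positive probability), for
every nonempty set `J` of roots of nonempty clusters of `𝔽_m`, the indicators
`1{|𝒞_{j,n}| ≥ K}`, `j ∈ J`, are negatively correlated, and so are the indicators
`1{|𝒞_{j,n}| < K}`:
`ℙ(∀ j ∈ J, |𝒞_{j,n}| ≥ K | A) ≤ ∏_{j∈J} ℙ(|𝒞_{j,n}| ≥ K | A)`, and likewise with `< K`. -/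
theorem cluster_sizes_negatively_correlated
    (α : ℝ) (hα0 : 0 ≤ α) (hα1 : α < 1)
    {Ω : Type} [MeasurableSpace Ω] (P : Measure Ω) [IsProbabilityMeasure P]
    (ξ : ℕ → Ω → Bool) (u : ℕ → Ω → ℕ) (root : ℕ → Ω → ℕ)
    (hlaw : ForestLaw P α ξ u) (hroot : IsForestRoot ξ u root)
    (m n : ℕ) (hm : 2 ≤ m) (hmn : m ≤ n) (K : ℝ) (hK : 0 < K)
    (a : ℕ → Bool) (b : ℕ → ℕ)
    (hpos : (P {ω | ∀ k, 2 ≤ k → k ≤ m → (ξ k ω = a k ∧ u k ω = b k)}).toReal ≠ 0)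
    (J : Finset ℕ) (hJne : J.Nonempty)
    (hJroots : ∀ ω ∈ {ω : Ω | ∀ k, 2 ≤ k → k ≤ m → (ξ k ω = a k ∧ u k ω = b k)},
      ∀ j ∈ J, 1 ≤ clusterSize root m j ω) :
    ((P ({ω | ∀ k, 2 ≤ k → k ≤ m → (ξ k ω = a k ∧ u k ω = b k)} ∩
        {ω | ∀ j ∈ J, K ≤ (clusterSize root n j ω : ℝ)})).toReal /
      (P {ω | ∀ k, 2 ≤ k → k ≤ m → (ξ k ω = a k ∧ u k ω = b k)}).toReal ≤
      ∏ j ∈ J,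
        (P ({ω | ∀ k, 2 ≤ k → k ≤ m → (ξ k ω = a k ∧ u k ω = b k)} ∩
            {ω | K ≤ (clusterSize root n j ω : ℝ)})).toReal /
          (P {ω | ∀ k, 2 ≤ k → k ≤ m → (ξ k ω = a k ∧ u k ω = b k)}).toReal) ∧
    ((P ({ω | ∀ k, 2 ≤ k → k ≤ m → (ξ k ω = a k ∧ u k ω = b k)} ∩
        {ω | ∀ j ∈ J, (clusterSize root n j ω : ℝ) < K})).toReal /
      (P {ω | ∀ k, 2 ≤ k → k ≤ m → (ξ k ω = a k ∧ u k ω = b k)}).toReal ≤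
      ∏ j ∈ J,
        (P ({ω | ∀ k, 2 ≤ k → k ≤ m → (ξ k ω = a k ∧ u k ω = b k)} ∩
            {ω | (clusterSize root n j ω : ℝ) < K})).toReal /
          (P {ω | ∀ k, 2 ≤ k → k ≤ m → (ξ k ω = a k ∧ u k ω = b k)}).toReal) := by
  classical
  have hα1' : α ≤ 1 := le_of_lt hα1
  -- identify the conditioning event with `Dset`
  have hPA : (P {ω | ∀ k, 2 ≤ k → k ≤ m → (ξ k ω = a k ∧ u k ω = b k)}).toReal
      = ∏ k ∈ Finset.Icc 2 m, NCaux.wfac α k (a k) (b k) :=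
    NCaux.hlaw_toReal hlaw hm a b
  set WA : ℝ := ∏ k ∈ Finset.Icc 2 m, NCaux.wfac α k (a k) (b k) with hWAdef
  have hWA : WA ≠ 0 := by rw [← hPA]; exact hpos
  -- validity of `b` on `[2,m]`
  have hval : ∀ k, 2 ≤ k → k ≤ m → 1 ≤ b k ∧ b k ≤ k - 1 := by
    intro k hk2 hkm
    by_contra hcon
    apply hWA
    apply Finset.prod_eq_zero (i := k) (by simp only [Finset.mem_Icc]; omega)
    unfold NCaux.wfac
    rw [if_neg hcon, mul_zero]
  -- roots in `J` are at most `m`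
  have hjm : ∀ j ∈ J, j ≤ m := by
    have hAne : (NCaux.Dset ξ u m a b).Nonempty := by
      rw [Set.nonempty_iff_ne_empty]
      intro h
      apply hpos
      have : {ω : Ω | ∀ k, 2 ≤ k → k ≤ m → (ξ k ω = a k ∧ u k ω = b k)}
          = NCaux.Dset ξ u m a b := rfl
      rw [this, h]
      simp
    obtain ⟨ω₀, hω₀⟩ := hAne
    intro j hj
    have h1 := hJroots ω₀ hω₀ j hj
    have h2 : clusterSize root m j ω₀ = NCaux.fib (NCaux.rootMap a b) m j := by
      unfold clusterSize NCaux.fib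
      apply congrArg
      apply Finset.filter_congr
      intro k hk
      simp only [Finset.mem_Icc] at hk
      rw [NCaux.root_eq_rootMap hroot a b m ω₀ hω₀ hval k hk.1 hk.2]
    rw [h2] at h1
    obtain ⟨k, hk⟩ := Finset.card_pos.1 h1
    simp only [NCaux.fib, Finset.mem_filter, Finset.mem_Icc] at hk
    have := NCaux.rootMap_le a b k
    omega
  have hr : m + (n - m) = n := by omega
  constructor
  · -- the `≥ K` case
    set φ : ℕ → ℝ := fun s => if K ≤ (s:ℝ) then (1:ℝ) else 0 with hφdef
    have hφ0 : ∀ s, 0 ≤ φ s := by intro s; simp only [hφdef]; split <;> norm_num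
    have hφ1 : ∀ s, φ s ≤ 1 := by intro s; simp only [hφdef]; split <;> norm_num
    have hφmono : ∀ s, φ s ≤ φ (s+1) := by
      intro s
      simp only [hφdef]
      by_cases h : K ≤ (s:ℝ)
      · rw [if_pos h, if_pos (by push_cast; linarith)]
      · rw [if_neg h]; split <;> norm_num
    have e1 : (P ({ω | ∀ k, 2 ≤ k → k ≤ m → (ξ k ω = a k ∧ u k ω = b k)} ∩
          {ω | ∀ j ∈ J, K ≤ (clusterSize root n j ω : ℝ)})).toReal
        = WA * NCaux.Hfun α φ J (n - m) m (NCaux.rootMap a b) :=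
      NCaux.bridge hlaw hroot J (fun s => K ≤ (s:ℝ)) φ
        (fun s hs => if_pos hs) (fun s hs => if_neg hs) n (n - m) m a b hr hm hval
    have e2 : ∀ j ∈ J, (P ({ω | ∀ k, 2 ≤ k → k ≤ m → (ξ k ω = a k ∧ u k ω = b k)} ∩
          {ω | K ≤ (clusterSize root n j ω : ℝ)})).toReal
        = WA * NCaux.Gfun α φ (n - m) m (NCaux.fib (NCaux.rootMap a b) m j) := by
      intro j hj
      have h := NCaux.bridge hlaw hroot {j} (fun s => K ≤ (s:ℝ)) φ
        (fun s hs => if_pos hs) (fun s hs => if_neg hs) n (n - m) m a b hr hm hval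
      rw [NCaux.H_single j (n - m) m (NCaux.rootMap a b) (hjm j hj) (by omega)] at h
      have hset : NCaux.Dset ξ u m a b ∩
          {ω | ∀ i ∈ ({j} : Finset ℕ), K ≤ ((clusterSize root n i ω : ℕ) : ℝ)}
          = {ω : Ω | ∀ k, 2 ≤ k → k ≤ m → (ξ k ω = a k ∧ u k ω = b k)} ∩
            {ω | K ≤ (clusterSize root n j ω : ℝ)} := by
        apply congrArg
        ext ω
        simp
      rw [hset] at h
      exact h
    rw [hPA, e1, mul_div_cancel_left₀ _ hWA,
      Finset.prod_congr rfl (fun j hj => by rw [e2 j hj, mul_div_cancel_left₀ _ hWA])]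
    exact NCaux.main_ineq hα0 hα1' hφ0 hφ1 (Or.inl hφmono) J (n - m) m
      (NCaux.rootMap a b) (by omega) hjm
  · -- the `< K` case
    set φ : ℕ → ℝ := fun s => if (s:ℝ) < K then (1:ℝ) else 0 with hφdef
    have hφ0 : ∀ s, 0 ≤ φ s := by intro s; simp only [hφdef]; split <;> norm_num
    have hφ1 : ∀ s, φ s ≤ 1 := by intro s; simp only [hφdef]; split <;> norm_num
    have hφanti : ∀ s, φ (s+1) ≤ φ s := by
      intro s
      simp only [hφdef]
      by_cases h : ((s+1:ℕ):ℝ) < K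
      · rw [if_pos h, if_pos (by push_cast at h ⊢; linarith)]
      · rw [if_neg h]; split <;> norm_num
    have e1 : (P ({ω | ∀ k, 2 ≤ k → k ≤ m → (ξ k ω = a k ∧ u k ω = b k)} ∩
          {ω | ∀ j ∈ J, (clusterSize root n j ω : ℝ) < K})).toReal
        = WA * NCaux.Hfun α φ J (n - m) m (NCaux.rootMap a b) :=
      NCaux.bridge hlaw hroot J (fun s => (s:ℝ) < K) φ
        (fun s hs => if_pos hs) (fun s hs => if_neg hs) n (n - m) m a b hr hm hval
    have e2 : ∀ j ∈ J, (P ({ω | ∀ k, 2 ≤ k → k ≤ m → (ξ k ω = a k ∧ u k ω = b k)} ∩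
          {ω | (clusterSize root n j ω : ℝ) < K})).toReal
        = WA * NCaux.Gfun α φ (n - m) m (NCaux.fib (NCaux.rootMap a b) m j) := by
      intro j hj
      have h := NCaux.bridge hlaw hroot {j} (fun s => (s:ℝ) < K) φ
        (fun s hs => if_pos hs) (fun s hs => if_neg hs) n (n - m) m a b hr hm hval
      rw [NCaux.H_single j (n - m) m (NCaux.rootMap a b) (hjm j hj) (by omega)] at h
      have hset : NCaux.Dset ξ u m a b ∩
          {ω | ∀ i ∈ ({j} : Finset ℕ), ((clusterSize root n i ω : ℕ) : ℝ) < K}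
          = {ω : Ω | ∀ k, 2 ≤ k → k ≤ m → (ξ k ω = a k ∧ u k ω = b k)} ∩
            {ω | (clusterSize root n j ω : ℝ) < K} := by
        apply congrArg
        ext ω
        simp
      rw [hset] at h
      exact h
    rw [hPA, e1, mul_div_cancel_left₀ _ hWA,
      Finset.prod_congr rfl (fun j hj => by rw [e2 j hj, mul_div_cancel_left₀ _ hWA])]
    exact NCaux.main_ineq hα0 hα1' hφ0 hφ1 (Or.inr hφanti) J (n - m) m
      (NCaux.rootMap a b) (by omega) hjm
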